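/- If a nogood δ is violated by a total consistent assignment A and ε is an antecedent of a literal σ ∈ δ (i.e., ε \ A[σ] = {σ̄} where A[σ] is the prefix of A before σ), then the resolvent (δ \ {σ}) ∪ (ε \ {σ̄}) is also violated by A. -/
import Mathlib

inductive Lit (V : Type) where
  | pos : V → Lit V
  | neg : V → Lit V
deriving DecidableEq

def Lit.compl {V : Type} : Lit V → Lit V
  | .pos v => .neg v
  | .neg v => .pos v

def Lit.var {V : Type} : Lit V → V
  | .pos v => v
  | .neg v => v

/-- The prefix `A[σ]` of the sequence `A` strictly before the (first)
occurrence of `σ`; equals `A` itself if `σ ∉ A`. -/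
def pref {V : Type} [DecidableEq V] (A : List (Lit V)) (σ : Lit V) : List (Lit V) :=
  A.takeWhile (fun τ => τ ≠ σ)

/-- if a nogood `δ` is violated by a total consistent assignment
`A` (a sequence with no variable assigned twice), and `ε` is an antecedent of a
literal `σ ∈ δ`, i.e., `ε \ A[σ] = {σ̄}`, then the resolvent
`(δ \ {σ}) ∪ (ε \ {σ̄})` is also violated by `A`. -/
theorem stmt6 {V : Type} [DecidableEq V]
    (A : List (Lit V))
    (hnd : (A.map Lit.var).Nodup)
    (hcons : ∀ l ∈ A, l.compl ∉ A)
    (δ ε : Set (Lit V)) (σ : Lit V)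
    (hσ : σ ∈ δ)
    (hviol : ∀ l ∈ δ, l ∈ A)
    (hante : {l | l ∈ ε ∧ l ∉ pref A σ} = {Lit.compl σ}) :
    ∀ l ∈ (δ \ {σ}) ∪ (ε \ {Lit.compl σ}), l ∈ A := by
  rintro l (⟨hl, -⟩ | ⟨hl, hne⟩)
  · exact hviol l hl
  · by_cases hp : l ∈ pref A σ
    · exact (List.takeWhile_prefix _).subset hp
    · exact absurd (hante ▸ (⟨hl, hp⟩ : l ∈ {x | x ∈ ε ∧ x ∉ pref A σ})) hne
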